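/- Let X, Y ∈ ℝ^{n×n} be orthogonal matrices and let k ≤ n. Write X = [X₀, X₁] and Y = [Y₀, Y₁], where X₀, Y₀ ∈ ℝ^{n×k} consist of the first k columns of X and Y respectively, and X₁, Y₁ ∈ ℝ^{n×(n−k)} consist of the remaining n−k columns. Then ‖X₀X₀ᵀ − Y₀Y₀ᵀ‖_F = √2 · ‖X₀ᵀ Y₁‖_F. -/
import Mathlib

open Matrix

/-- Frobenius norm of a real matrix: `‖A‖_F = sqrt (tr (A Aᵀ))`. -/
noncomputable def frob {m k : Type*} [Fintype m] [Fintype k] (A : Matrix m k ℝ) : ℝ :=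
  Real.sqrt (Matrix.trace (A * Aᵀ))

/-- The submatrix of `A` consisting of the `len` consecutive columns starting at
(0-indexed) column `a`. -/
noncomputable def colsSeg {n : ℕ} (A : Matrix (Fin n) (Fin n) ℝ) (a len : ℕ) :
    Matrix (Fin n) (Fin len) ℝ :=
  Matrix.of fun r c => if h : a + (c : ℕ) < n then A r ⟨a + (c : ℕ), h⟩ else 0

lemma colsSeg_apply {n : ℕ} (A : Matrix (Fin n) (Fin n) ℝ) (a len : ℕ)
    (h : a + len ≤ n) (r : Fin n) (c : Fin len) :
    colsSeg A a len r c = A r ⟨a + (c : ℕ), by omega⟩ := by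
  simp only [colsSeg, Matrix.of_apply]
  rw [dif_pos (by omega : a + (c : ℕ) < n)]

lemma sum_split {n k : ℕ} (hk : k ≤ n) (a : Fin n → ℝ) :
    (∑ c : Fin k, a ⟨c, by omega⟩) + ∑ c : Fin (n - k), a ⟨k + c, by omega⟩ = ∑ i, a i := by
  rw [← (finCongr (show k + (n - k) = n by omega)).sum_comp a, Fin.sum_univ_add]
  congr 1

/-- Lemma 1: for orthogonal `X = [X₀, X₁]` and `Y = [Y₀, Y₁]` split after the first
`k` columns, `‖X₀X₀ᵀ − Y₀Y₀ᵀ‖_F = √2 ‖X₀ᵀ Y₁‖_F`. -/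
theorem stmt2 (n k : ℕ) (hk : k ≤ n)
    (X Y : Matrix (Fin n) (Fin n) ℝ)
    (hX : Xᵀ * X = 1 ∧ X * Xᵀ = 1) (hY : Yᵀ * Y = 1 ∧ Y * Yᵀ = 1) :
    frob (colsSeg X 0 k * (colsSeg X 0 k)ᵀ - colsSeg Y 0 k * (colsSeg Y 0 k)ᵀ)
      = Real.sqrt 2 * frob ((colsSeg X 0 k)ᵀ * colsSeg Y k (n - k)) := by
  set P := colsSeg X 0 k with hP
  set Q := colsSeg Y 0 k with hQ
  set R := colsSeg Y k (n - k) with hR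
  have h0k : 0 + k ≤ n := by omega
  have hkn : k + (n - k) ≤ n := by omega
  -- Pᵀ P = 1
  have hPP : Pᵀ * P = 1 := by
    ext i j
    have h1 := congrFun (congrFun hX.1 ⟨i, by omega⟩) ⟨j, by omega⟩
    simp only [Matrix.mul_apply, Matrix.transpose_apply, Matrix.one_apply, Fin.mk.injEq,
      Fin.ext_iff] at h1 ⊢
    simp only [hP, colsSeg_apply X 0 k h0k, Nat.zero_add]
    exact h1
  have hQQ : Qᵀ * Q = 1 := by
    ext i j
    have h1 := congrFun (congrFun hY.1 ⟨i, by omega⟩) ⟨j, by omega⟩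
    simp only [Matrix.mul_apply, Matrix.transpose_apply, Matrix.one_apply, Fin.mk.injEq,
      Fin.ext_iff] at h1 ⊢
    simp only [hQ, colsSeg_apply Y 0 k h0k, Nat.zero_add]
    exact h1
  -- Q Qᵀ + R Rᵀ = 1
  have hsplit : Q * Qᵀ + R * Rᵀ = 1 := by
    ext r s
    calc (Q * Qᵀ + R * Rᵀ) r s
        = (∑ c : Fin k, Y r ⟨c, by omega⟩ * Y s ⟨c, by omega⟩)
          + ∑ c : Fin (n - k), Y r ⟨k + c, by omega⟩ * Y s ⟨k + c, by omega⟩ := by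
          simp only [Matrix.add_apply, Matrix.mul_apply, Matrix.transpose_apply, hQ, hR,
            colsSeg_apply Y 0 k h0k, colsSeg_apply Y k (n - k) hkn, Nat.zero_add]
      _ = ∑ i, Y r i * Y s i := sum_split hk fun i => Y r i * Y s i
      _ = (Y * Yᵀ) r s := by simp [Matrix.mul_apply]
      _ = (1 : Matrix (Fin n) (Fin n) ℝ) r s := by rw [hY.2]
  -- traces
  have htrP : trace (P * Pᵀ) = (k : ℝ) := by
    rw [Matrix.trace_mul_comm, hPP, Matrix.trace_one]; simp
  have htrAA : trace ((P * Pᵀ) * (P * Pᵀ)) = (k : ℝ) := by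
    have h : (P * Pᵀ) * (P * Pᵀ) = P * Pᵀ := by
      rw [Matrix.mul_assoc, ← Matrix.mul_assoc Pᵀ, hPP, Matrix.one_mul]
    rw [h, htrP]
  have htrBB : trace ((Q * Qᵀ) * (Q * Qᵀ)) = (k : ℝ) := by
    have h : (Q * Qᵀ) * (Q * Qᵀ) = Q * Qᵀ := by
      rw [Matrix.mul_assoc, ← Matrix.mul_assoc Qᵀ, hQQ, Matrix.one_mul]
    rw [h, Matrix.trace_mul_comm, hQQ, Matrix.trace_one]; simp
  set t := trace (Pᵀ * Q * (Qᵀ * P)) with ht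
  have htrAB : trace ((P * Pᵀ) * (Q * Qᵀ)) = t := by
    rw [Matrix.mul_assoc, Matrix.trace_mul_comm, ht, Matrix.mul_assoc, Matrix.mul_assoc,
      Matrix.mul_assoc]
  have htrBA : trace ((Q * Qᵀ) * (P * Pᵀ)) = t := by
    rw [Matrix.trace_mul_comm, htrAB]
  -- RHS trace
  have htrR : trace ((Pᵀ * R) * (Pᵀ * R)ᵀ) = (k : ℝ) - t := by
    have h1 : (Pᵀ * R) * (Pᵀ * R)ᵀ = Pᵀ * (R * Rᵀ) * P := by
      rw [Matrix.transpose_mul, Matrix.transpose_transpose]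
      rw [Matrix.mul_assoc, Matrix.mul_assoc, Matrix.mul_assoc]
    have h2 : R * Rᵀ = 1 - Q * Qᵀ := by rw [← hsplit]; abel
    rw [h1, h2]
    have h3 : Pᵀ * (1 - Q * Qᵀ) * P = Pᵀ * P - Pᵀ * Q * (Qᵀ * P) := by
      rw [Matrix.mul_sub, Matrix.mul_one, Matrix.sub_mul]
      rw [Matrix.mul_assoc, Matrix.mul_assoc, Matrix.mul_assoc]
    rw [h3, Matrix.trace_sub, hPP, Matrix.trace_one, ht]; simp
  -- LHS trace
  have htrL : trace ((P * Pᵀ - Q * Qᵀ) * (P * Pᵀ - Q * Qᵀ)ᵀ) = 2 * ((k : ℝ) - t) := by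
    have hsym : (P * Pᵀ - Q * Qᵀ)ᵀ = P * Pᵀ - Q * Qᵀ := by
      rw [Matrix.transpose_sub, Matrix.transpose_mul, Matrix.transpose_mul,
        Matrix.transpose_transpose, Matrix.transpose_transpose]
    rw [hsym]
    have hexp : (P * Pᵀ - Q * Qᵀ) * (P * Pᵀ - Q * Qᵀ)
        = (P * Pᵀ) * (P * Pᵀ) - (P * Pᵀ) * (Q * Qᵀ) - (Q * Qᵀ) * (P * Pᵀ)
          + (Q * Qᵀ) * (Q * Qᵀ) := by noncomm_ring
    rw [hexp, Matrix.trace_add, Matrix.trace_sub, Matrix.trace_sub,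
      htrAA, htrBB, htrAB, htrBA]
    ring
  rw [frob, frob, htrL, htrR]
  rw [show (2 : ℝ) * ((k : ℝ) - t) = 2 * ((k : ℝ) - t) from rfl,
    Real.sqrt_mul (by norm_num : (0:ℝ) ≤ 2)]
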